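/- Every odd-dimensional Dehn–Sommerville complex has zero Euler characteristic: if G is a finite abstract simplicial complex of odd dimension d whose f-function satisfies f_G(−1−t) = (−1)^{d+1} f_G(t), then χ(G) = 0. More generally, if dim(G) = d and f_G(−1−t) = (−1)^{d+1} f_G(t), then χ(G) = 1 + (−1)^d. -/
import Mathlib


open Finset Polynomial

namespace SphereFormula

variable {V : Type} [DecidableEq V]

/-- A finite abstract simplicial complex: a finite collection of nonempty finite sets
that is closed under taking nonempty subsets. -/
def IsComplex (G : Finset (Finset V)) : Prop :=
  ∀ x ∈ G, x.Nonempty ∧ ∀ y, y ⊆ x → y.Nonempty → y ∈ G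

/-- `w x = (-1)^(dim x)` where `dim x = |x| - 1`. -/
def w (x : Finset V) : ℤ := (-1) ^ (x.card - 1)

/-- Euler characteristic of a finite set of simplices: `χ(A) = Σ_{x ∈ A} w x`. -/
def chi (A : Finset (Finset V)) : ℤ := ∑ x ∈ A, w x

/-- The star `U(x) = {y ∈ G : x ⊆ y}`. -/
def star (G : Finset (Finset V)) (x : Finset V) : Finset (Finset V) :=
  G.filter fun y => x ⊆ y

/-- The unit ball `B(x) = {z ∈ G : z ⊆ y for some y ∈ U(x)}` (closure of the star). -/
def ball (G : Finset (Finset V)) (x : Finset V) : Finset (Finset V) :=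
  G.filter fun z => ∃ y ∈ G, x ⊆ y ∧ z ⊆ y

/-- The unit sphere `S(x) = B(x) \ U(x)`. -/
def sphere (G : Finset (Finset V)) (x : Finset V) : Finset (Finset V) :=
  ball G x \ star G x

/-- The vertex set of `G`: those `v` with `{v} ∈ G`. -/
def verts (G : Finset (Finset V)) : Finset V :=
  (G.biUnion id).filter fun v => {v} ∈ G

/-- Contractibility, defined inductively: a single vertex complex is contractible, and `G`
is contractible if there is `x ∈ G` with both `S(x)` and `G \ U(x)` contractible. -/
inductive Contractible : Finset (Finset V) → Prop where
  | point (v : V) : Contractible ({({v} : Finset V)} : Finset (Finset V))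
  | step (G : Finset (Finset V)) (x : Finset V) (hx : x ∈ G)
      (hS : Contractible (sphere G x)) (hG : Contractible (G \ star G x)) :
      Contractible G

mutual
  /-- `G` is a `d`-manifold (`d ≥ 0`): every unit sphere `S(x)` is a `(d-1)`-sphere. -/
  inductive IsManifold : ℤ → Finset (Finset V) → Prop where
    | mk (d : ℤ) (G : Finset (Finset V)) (hd : 0 ≤ d)
        (h : ∀ x ∈ G, IsSphere (d - 1) (sphere G x)) : IsManifold d G

  /-- `d`-spheres: the empty complex is the `(-1)`-sphere, and a `d`-sphere is a
  `d`-manifold `G` such that `G \ U(x)` is contractible for some `x ∈ G`. -/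
  inductive IsSphere : ℤ → Finset (Finset V) → Prop where
    | empty : IsSphere (-1) (∅ : Finset (Finset V))
    | mk (d : ℤ) (G : Finset (Finset V)) (hm : IsManifold d G)
        (h : ∃ x ∈ G, Contractible (G \ star G x)) : IsSphere d G
end

/-- The f-function `f_G(t) = 1 + Σ_{k ≥ 0} f_k(G) t^(k+1) = 1 + Σ_{x ∈ G} t^|x|`. -/
noncomputable def fPoly (G : Finset (Finset V)) : Polynomial ℚ :=
  1 + ∑ x ∈ G, Polynomial.X ^ x.card

/-- `F_H(t) = ∫_0^t f_H(s) ds = t + Σ_{k ≥ 0} f_k(H) t^(k+2)/(k+2)`. -/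
noncomputable def FPoly (H : Finset (Finset V)) : Polynomial ℚ :=
  Polynomial.X +
    ∑ x ∈ H, Polynomial.C (((x.card : ℚ) + 1)⁻¹) * Polynomial.X ^ (x.card + 1)

/-- The join `G + H = G ∪ H ∪ {x ∪ y : x ∈ G, y ∈ H}`. -/
def joinC (G H : Finset (Finset V)) : Finset (Finset V) :=
  G ∪ H ∪ (G ×ˢ H).image fun p => p.1 ∪ p.2

/-- The barycentric refinement: simplices are the nonempty chains in `(G, ⊆)`. -/
def bary (G : Finset (Finset V)) : Finset (Finset (Finset V)) :=
  G.powerset.filter fun c => c.Nonempty ∧ ∀ x ∈ c, ∀ y ∈ c, x ⊆ y ∨ y ⊆ x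

/-- `f` is locally injective: distinct vertices of a common simplex have distinct values. -/
def LocallyInjective (G : Finset (Finset V)) (f : V → ℤ) : Prop :=
  ∀ x ∈ G, ∀ v ∈ x, ∀ u ∈ x, v ≠ u → f v ≠ f u

/-- a Dehn–Sommerville complex of dimension `d` has `χ(G) = 1 + (-1)^d`;
in particular, odd-dimensional Dehn–Sommerville complexes have zero Euler characteristic. -/
theorem dehn_sommerville_chi {V : Type} [DecidableEq V] (G : Finset (Finset V))
    (hG : IsComplex G) (d : ℕ)
    (hdim : ∀ x ∈ G, x.card ≤ d + 1) (hdim' : ∃ x ∈ G, x.card = d + 1)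
    (hDS : (fPoly G).comp (-1 - Polynomial.X) = (-1) ^ (d + 1) * fPoly G) :
    chi G = 1 + (-1) ^ d ∧ (Odd d → chi G = 0) := by
  have key : (chi G : ℚ) = 1 + (-1) ^ d := by
    have h0 := congrArg (Polynomial.eval (0:ℚ)) hDS
    rw [Polynomial.eval_comp] at h0
    simp only [Polynomial.eval_mul, Polynomial.eval_pow, Polynomial.eval_neg,
      Polynomial.eval_one, Polynomial.eval_sub, Polynomial.eval_X] at h0
    have hev : Polynomial.eval (-1 - 0 : ℚ) (fPoly G) = 1 - (chi G : ℚ) := by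
      simp only [fPoly, Polynomial.eval_add, Polynomial.eval_one,
        Polynomial.eval_finset_sum, Polynomial.eval_pow, Polynomial.eval_X]
      have : ∑ x ∈ G, ((-1 - 0 : ℚ)) ^ x.card = - (chi G : ℚ) := by
        rw [chi]
        push_cast
        rw [← Finset.sum_neg_distrib]
        refine Finset.sum_congr rfl fun x hx => ?_
        have hc : 1 ≤ x.card := Finset.card_pos.mpr (hG x hx).1
        have : x.card = (x.card - 1) + 1 := (Nat.succ_pred_eq_of_pos hc).symm
        rw [w]
        push_cast
        rw [this, pow_succ]
        ring_nf
        simp [Nat.add_sub_cancel_left]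
      rw [this]; ring
    rw [hev] at h0
    have hfree : Polynomial.eval (0:ℚ) (fPoly G) = 1 := by
      simp only [fPoly, Polynomial.eval_add, Polynomial.eval_one,
        Polynomial.eval_finset_sum, Polynomial.eval_pow, Polynomial.eval_X]
      have : ∑ x ∈ G, (0:ℚ) ^ x.card = 0 := by
        refine Finset.sum_eq_zero fun x hx => ?_
        exact zero_pow (Nat.one_le_iff_ne_zero.mp (Finset.card_pos.mpr (hG x hx).1))
      rw [this]; ring
    rw [hfree] at h0
    have : (1 : ℚ) - chi G = (-1) ^ (d + 1) := by linarith [h0]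
    rw [pow_succ] at this
    linarith [this]
  have hchi : chi G = 1 + (-1) ^ d := by
    exact_mod_cast key
  refine ⟨hchi, fun hodd => ?_⟩
  rw [hchi, Odd.neg_one_pow hodd]; ring


end SphereFormula
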